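/- arXiv:2507.09152 — 2 statements merged into one kernel-verified Lean document; each statement's English description precedes it below -/
import Mathlib

section
/- Assume m = n−1. Then a mechanism satisfies efficiency, egalitarian-equivalence, strategy-proofness, individual rationality, and no subsidy if and only if it is an efficient Vickrey mechanism (every agent with valuation above the minimum valuation receives an object and pays the minimum valuation; losers pay nothing; the object allocation maximizes total valuation). -/
open scoped NNReal
open Finset

noncomputable section

/-- The `k`-th highest valuation (1-indexed); junk value `0` if `k` is out of range. -/
def vk (n k : ℕ) (v : Fin n → ℝ≥0) : ℝ≥0 :=
  if h : 0 < k ∧ k ≤ n then v (Tuple.sort v ⟨n - k, by omega⟩) else 0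

/-- `v ∈ Ṽ` : the `(m+1)`-th through `n`-th highest valuations are all equal. -/
def tilde (n m : ℕ) (v : Fin n → ℝ≥0) : Prop :=
  ∀ k, m + 1 ≤ k → k ≤ n → vk n k v = vk n (m + 1) v

/-- A mechanism: object assignment and transfers, allocating at most `m` objects. -/
structure Mechanism (n m : ℕ) where
  x : (Fin n → ℝ≥0) → Fin n → Bool
  t : (Fin n → ℝ≥0) → Fin n → ℝ
  feasible : ∀ v, (Finset.univ.filter fun i => x v i = true).card ≤ m

/-- Quasi-linear utility of a bundle `(x, t)` for valuation `w`. -/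
def util (z : Bool × ℝ) (w : ℝ≥0) : ℝ := (if z.1 then (w : ℝ) else 0) - z.2

def Mechanism.bundle {n m : ℕ} (f : Mechanism n m) (v : Fin n → ℝ≥0) (i : Fin n) :
    Bool × ℝ := (f.x v i, f.t v i)

def IR {n m : ℕ} (f : Mechanism n m) : Prop :=
  ∀ v i, 0 ≤ util (f.bundle v i) (v i)

def NoSubsidy {n m : ℕ} (f : Mechanism n m) : Prop :=
  ∀ v i, 0 ≤ f.t v i

def StrategyProof {n m : ℕ} (f : Mechanism n m) : Prop :=
  ∀ v (i : Fin n) (w : ℝ≥0),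
    util (f.bundle (Function.update v i w) i) (v i) ≤ util (f.bundle v i) (v i)

def EgalitarianEquivalent {n m : ℕ} (f : Mechanism n m) : Prop :=
  ∀ v, ∃ z₀ : Bool × ℝ, ∀ i, util (f.bundle v i) (v i) = util z₀ (v i)

def EnvyFree {n m : ℕ} (f : Mechanism n m) : Prop :=
  ∀ v i j, util (f.bundle v j) (v i) ≤ util (f.bundle v i) (v i)

/-- `x` maximizes total valuation among feasible object allocations. -/
def EffAlloc (n m : ℕ) (v : Fin n → ℝ≥0) (x : Fin n → Bool) : Prop :=
  ∀ y : Fin n → Bool, (Finset.univ.filter fun i => y i = true).card ≤ m →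
    (∑ i, if y i then (v i : ℝ) else 0) ≤ ∑ i, if x i then (v i : ℝ) else 0

def Efficient {n m : ℕ} (f : Mechanism n m) : Prop :=
  ∀ v, EffAlloc n m v (f.x v)

/-- Non-obvious manipulability: no report improves the sup or the inf (over others'
valuations) of an agent's utility compared to truth-telling. -/
def NOM {n m : ℕ} (f : Mechanism n m) : Prop :=
  ∀ (i : Fin n) (vi vi' : ℝ≥0),
    (⨆ w : Fin n → ℝ≥0, util (f.bundle (Function.update w i vi') i) vi) ≤
      (⨆ w : Fin n → ℝ≥0, util (f.bundle (Function.update w i vi) i) vi) ∧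
    (⨅ w : Fin n → ℝ≥0, util (f.bundle (Function.update w i vi') i) vi) ≤
      (⨅ w : Fin n → ℝ≥0, util (f.bundle (Function.update w i vi) i) vi)

/-- Winner selection function. -/
structure WSF (n m : ℕ) where
  τ : (Fin n → ℝ≥0) → Finset (Fin n)
  empty_of_not_tilde : ∀ v, ¬ tilde n m v → τ v = ∅
  mem_le : ∀ v i, i ∈ τ v → vk n (m + 1) v ≤ v i
  mem_of_lt : ∀ v, τ v ≠ ∅ → ∀ i, vk n (m + 1) v < v i → i ∈ τ v
  card_le : ∀ v, (τ v).card ≤ m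

def Uncompromising {n m : ℕ} (T : WSF n m) : Prop :=
  ∀ v (i : Fin n) (w : ℝ≥0), i ∈ T.τ v → vk n (m + 1) v < w →
    i ∈ T.τ (Function.update v i w)

/-- `f` is the `τ`-Vickrey mechanism combined with the no-trade. -/
def IsTauVickrey {n m : ℕ} (f : Mechanism n m) (T : WSF n m) : Prop :=
  ∀ v i, (f.x v i = true ↔ i ∈ T.τ v) ∧
    f.t v i = if i ∈ T.τ v then (vk n (m + 1) v : ℝ) else 0

/-- An efficient-Vickrey allocation at `v`: efficient object allocation, winners pay
the `(m+1)`-th highest valuation, losers pay nothing. -/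
def IsEVAlloc (n m : ℕ) (v : Fin n → ℝ≥0) (z : Fin n → Bool × ℝ) : Prop :=
  (Finset.univ.filter fun i => (z i).1 = true).card ≤ m ∧
  EffAlloc n m v (fun i => (z i).1) ∧
  ∀ i, (z i).2 = if (z i).1 then (vk n (m + 1) v : ℝ) else 0

/-- A pay-as-bid allocation at `v`: efficient object allocation, winners pay their
own valuation, losers pay nothing. -/
def IsPABAlloc (n m : ℕ) (v : Fin n → ℝ≥0) (z : Fin n → Bool × ℝ) : Prop :=
  (Finset.univ.filter fun i => (z i).1 = true).card ≤ m ∧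
  EffAlloc n m v (fun i => (z i).1) ∧
  ∀ i, (z i).2 = if (z i).1 then (v i : ℝ) else 0

/-- The Vickrey mechanism: winners are exactly the agents with `v i > v^{m+1}`,
winners pay `v^{m+1}`, losers get and pay nothing. -/
def IsVickrey {n m : ℕ} (f : Mechanism n m) : Prop :=
  ∀ v i, (f.x v i = true ↔ vk n (m + 1) v < v i) ∧
    f.t v i = if f.x v i then (vk n (m + 1) v : ℝ) else 0

/-- The efficient Vickrey mechanism combined with a pay-as-bid. -/
def IsEVPAB {n m : ℕ} (f : Mechanism n m) : Prop :=
  ∀ v, (tilde n m v → IsEVAlloc n m v (f.bundle v)) ∧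
    (¬ tilde n m v → IsPABAlloc n m v (f.bundle v))

/-- The class `F` of mechanisms. -/
def MemF {n m : ℕ} (f : Mechanism n m) : Prop :=
  EgalitarianEquivalent f ∧ NOM f ∧ Efficient f ∧ IR f ∧ NoSubsidy f


lemma vk_le {n m : ℕ} (h : m + 1 = n) (v : Fin n → ℝ≥0) (i : Fin n) :
    vk n (m + 1) v ≤ v i := by
  rw [vk, dif_pos ⟨Nat.succ_pos m, by omega⟩]
  have := Tuple.monotone_sort v (a := ⟨n - (m+1), by omega⟩) (b := (Tuple.sort v)⁻¹ i)
    (by simp [Fin.le_def]; omega)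
  simpa using this

lemma vk_eq {n m : ℕ} (h : m + 1 = n) (v : Fin n → ℝ≥0) :
    ∃ k, v k = vk n (m + 1) v := by
  rw [vk, dif_pos ⟨Nat.succ_pos m, by omega⟩]
  exact ⟨_, rfl⟩

lemma loser_val {n m : ℕ} (h : m + 1 = n) {v : Fin n → ℝ≥0} {x : Fin n → Bool}
    (hx : EffAlloc n m v x) {j : Fin n} (hj : x j = false) : v j = vk n (m + 1) v := by
  obtain ⟨k, hk⟩ := vk_eq h v
  refine le_antisymm ?_ (vk_le h v j)
  rw [← hk]
  rw [← NNReal.coe_le_coe]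
  set y : Fin n → Bool := fun i => decide (i ≠ k) with hy
  have hycard : (Finset.univ.filter fun i => y i = true).card ≤ m := by
    have : (Finset.univ.filter fun i => y i = true) = Finset.univ.erase k := by
      ext i; simp [hy, Finset.mem_erase]
    rw [this, Finset.card_erase_of_mem (mem_univ k)]
    simp; omega
  have hsum := hx y hycard
  have hL : (∑ i, if y i then (v i : ℝ) else 0)
      = (∑ i, (v i : ℝ)) - (∑ i, if i = k then (v i : ℝ) else 0) := by
    rw [← Finset.sum_sub_distrib]
    apply Finset.sum_congr rfl
    intro i _
    by_cases hik : i = k <;> simp [hy, hik]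
  have hR : (∑ i, if x i then (v i : ℝ) else 0)
      ≤ (∑ i, (v i : ℝ)) - (∑ i, if i = j then (v i : ℝ) else 0) := by
    rw [← Finset.sum_sub_distrib]
    apply Finset.sum_le_sum
    intro i _
    by_cases hij : i = j
    · subst hij; simp [hj]
    · simp only [if_neg hij, sub_zero]
      split <;> simp
  rw [Finset.sum_ite_eq' Finset.univ k (fun i => (v i : ℝ))] at hL
  rw [Finset.sum_ite_eq' Finset.univ j (fun i => (v i : ℝ))] at hR
  simp only [Finset.mem_univ, if_pos] at hL hR
  linarith

lemma exists_loser {n m : ℕ} (h : m + 1 = n) (f : Mechanism n m) (v : Fin n → ℝ≥0) :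
    ∃ j, f.x v j = false := by
  by_contra hc
  push_neg at hc
  have he : (Finset.univ.filter fun i => f.x v i = true) = Finset.univ :=
    Finset.filter_true_of_mem fun i _ => by simpa using hc i
  have := f.feasible v
  rw [he] at this
  simp [Finset.card_univ] at this
  omega

lemma loser_pay {n m : ℕ} (f : Mechanism n m) (hIR : IR f) (hNS : NoSubsidy f)
    (v : Fin n → ℝ≥0) (i : Fin n) (hx : f.x v i = false) : f.t v i = 0 := by
  have h1 := hIR v i
  have h2 := hNS v i
  simp [util, Mechanism.bundle, hx] at h1
  linarith

lemma winner_pay {n m : ℕ} (h : m + 1 = n) (f : Mechanism n m)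
    (hEE : EgalitarianEquivalent f) (hEff : Efficient f) (hIR : IR f) (hNS : NoSubsidy f)
    (v : Fin n → ℝ≥0) (i : Fin n) (hx : f.x v i = true) :
    f.t v i = (vk n (m + 1) v : ℝ) ∨ f.t v i = (v i : ℝ) := by
  obtain ⟨⟨b, t₀⟩, hz⟩ := hEE v
  obtain ⟨j, hj⟩ := exists_loser h f v
  have hvj : v j = vk n (m + 1) v := loser_val h (hEff v) hj
  have htj : f.t v j = 0 := loser_pay f hIR hNS v j hj
  have h0 := hz j
  have hi := hz i
  cases b
  · right
    simp [util, Mechanism.bundle, hx, hj, htj] at h0 hi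
    linarith
  · left
    simp [util, Mechanism.bundle, hx, hj, htj] at h0 hi
    rw [← hvj]
    linarith

lemma winner_pay_vk {n m : ℕ} (h : m + 1 = n) (f : Mechanism n m)
    (hEff : Efficient f) (hEE : EgalitarianEquivalent f) (hSP : StrategyProof f)
    (hIR : IR f) (hNS : NoSubsidy f)
    (v : Fin n → ℝ≥0) (i : Fin n) (hx : f.x v i = true) :
    f.t v i = (vk n (m + 1) v : ℝ) := by
  rcases winner_pay h f hEE hEff hIR hNS v i hx with h1 | h1
  · exact h1
  rcases eq_or_lt_of_le (vk_le h v i) with heq | hlt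
  · rw [h1, ← heq]
  exfalso
  set w : ℝ≥0 := (vk n (m + 1) v + v i) / 2 with hwdef
  have hwc : (w : ℝ) = ((vk n (m + 1) v : ℝ) + (v i : ℝ)) / 2 := by
    rw [hwdef]; push_cast; ring
  have hltc : (vk n (m + 1) v : ℝ) < (v i : ℝ) := hlt
  have hw1 : vk n (m + 1) v < w := by
    rw [← NNReal.coe_lt_coe, hwc]; linarith
  have hw2 : (w : ℝ) < (v i : ℝ) := by rw [hwc]; linarith
  set v' := Function.update v i w with hv'
  have hvi' : v' i = w := Function.update_self i w v
  have hxi' : f.x v' i = true := by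
    by_contra hc
    have hc' : f.x v' i = false := by simpa using hc
    have h2 : v' i = vk n (m + 1) v' := loser_val h (hEff v') hc'
    obtain ⟨k, hk⟩ := vk_eq h v
    have hki : k ≠ i := by
      intro e; rw [e] at hk
      exact absurd hk.symm (ne_of_lt hlt)
    have h3 : vk n (m + 1) v' ≤ v' k := vk_le h v' k
    have h4 : v' k = v k := Function.update_of_ne hki w v
    rw [h4, hk] at h3
    rw [hvi'] at h2
    rw [← h2] at h3
    exact absurd hw1 (not_lt.mpr h3)
  have hple : f.t v' i ≤ (w : ℝ) := by
    rcases winner_pay h f hEE hEff hIR hNS v' i hxi' with h2 | h2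
    · rw [h2]
      have := vk_le h v' i
      rw [hvi'] at this
      exact_mod_cast this
    · rw [h2, hvi']
  have hsp := hSP v i w
  rw [← hv'] at hsp
  simp [util, Mechanism.bundle, hx, hxi', h1] at hsp
  linarith

theorem stmt10 (n m : ℕ) (h : m + 1 = n) (f : Mechanism n m) :
    (Efficient f ∧ EgalitarianEquivalent f ∧ StrategyProof f ∧
        IR f ∧ NoSubsidy f) ↔
      ∀ v, IsEVAlloc n m v (f.bundle v) := by
  constructor
  · rintro ⟨hEff, hEE, hSP, hIR, hNS⟩ v
    refine ⟨f.feasible v, hEff v, ?_⟩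
    intro i
    by_cases hx : f.x v i = true
    · simp only [Mechanism.bundle, hx, if_true]
      exact winner_pay_vk h f hEff hEE hSP hIR hNS v i hx
    · have hx' : f.x v i = false := by simpa using hx
      simp only [Mechanism.bundle, hx', if_false, Bool.false_eq_true]
      exact loser_pay f hIR hNS v i hx'
  · intro hEV
    have hxeff : ∀ v, EffAlloc n m v (f.x v) := fun v => (hEV v).2.1
    have hpay : ∀ v i, f.t v i = if f.x v i then (vk n (m + 1) v : ℝ) else 0 :=
      fun v i => (hEV v).2.2 i
    have hlv : ∀ v (i : Fin n), f.x v i = false → v i = vk n (m + 1) v :=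
      fun v i hi => loser_val h (hxeff v) hi
    refine ⟨hxeff, ?_, ?_, ?_, ?_⟩
    · -- EE
      intro v
      refine ⟨(true, (vk n (m + 1) v : ℝ)), fun i => ?_⟩
      by_cases hx : f.x v i = true
      · simp [util, Mechanism.bundle, hx, hpay v i]
      · have hx' : f.x v i = false := by simpa using hx
        have := hlv v i hx'
        simp [util, Mechanism.bundle, hx', hpay v i, this]
    · -- SP
      intro v i w
      set v' := Function.update v i w with hv'
      have tu : util (f.bundle v i) (v i) = (v i : ℝ) - (vk n (m + 1) v : ℝ) := by
        by_cases hx : f.x v i = true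
        · simp [util, Mechanism.bundle, hx, hpay v i]
        · have hx' : f.x v i = false := by simpa using hx
          have := hlv v i hx'
          simp [util, Mechanism.bundle, hx', hpay v i, this]
      rw [tu]
      by_cases hx' : f.x v' i = true
      · have du : util (f.bundle v' i) (v i) = (v i : ℝ) - (vk n (m + 1) v' : ℝ) := by
          simp [util, Mechanism.bundle, hx', hpay v' i]
        rw [du]
        obtain ⟨j, hj⟩ := exists_loser h f v'
        have hji : j ≠ i := by
          intro e; rw [e, hx'] at hj; simp at hj
        have h1 : v' j = vk n (m + 1) v' := hlv v' j hj
        have h2 : v' j = v j := Function.update_of_ne hji w v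
        have h3 : vk n (m + 1) v ≤ v j := vk_le h v j
        have : (vk n (m + 1) v : ℝ) ≤ (vk n (m + 1) v' : ℝ) := by
          rw [← h1, h2]; exact_mod_cast h3
        linarith
      · have hx'' : f.x v' i = false := by simpa using hx'
        have h3 : vk n (m + 1) v ≤ v i := vk_le h v i
        have h3' : (vk n (m + 1) v : ℝ) ≤ (v i : ℝ) := h3
        simp [util, Mechanism.bundle, hx'', hpay v' i]
        exact h3
    · -- IR
      intro v i
      by_cases hx : f.x v i = true
      · have h3' : (vk n (m + 1) v : ℝ) ≤ (v i : ℝ) := vk_le h v i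
        simp [util, Mechanism.bundle, hx, hpay v i]
        exact vk_le h v i
      · have hx' : f.x v i = false := by simpa using hx
        simp [util, Mechanism.bundle, hx', hpay v i]
    · -- NoSubsidy
      intro v i
      rw [hpay v i]
      split
      · exact (vk n (m + 1) v).coe_nonneg
      · exact le_refl 0


end
end

section
/- The efficient Vickrey mechanism combined with a pay-as-bid (apply the efficient Vickrey rule when v ∈ Ṽ and the pay-as-bid rule when v ∉ Ṽ) is the unique agent welfare optimal mechanism in the class F of mechanisms satisfying egalitarian-equivalence, non-obvious manipulability, efficiency, individual rationality, and no subsidy: it belongs to F, it welfare dominates every mechanism in F, and any other mechanism in F fails to welfare dominate it. -/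
open scoped NNReal
open Finset

noncomputable section

/-!
Under the efficient Vickrey mechanism combined with a pay-as-bid `f`, agent `i`'s utility at
`v` is `v i - v^{m+1}` when `v ∈ Ṽ` (there every loser has valuation exactly `v^{m+1}`) and `0`
otherwise. Non-obvious manipulability holds because truth-telling attains the largest conceivable
utility `v i` (when all others value `0`, if `m > 0`) and never falls below `0`, while any report
loses, with utility `0`, against higher bids.

Let `g ∈ F`. Individual rationality and no subsidy give every `g`-loser utility `0`, and a loser
exists since `m < n`. Egalitarian-equivalence makes all utilities of the form `util z₀ (v i)`.
If `z₀` carries no object, all utilities are `0`. Otherwise they are `v i - p`, so all `g`-losers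
share the valuation `p`; efficiency then forces `p = v^{m+1}` and `v ∈ Ṽ`, and `g` gives the
same utilities as `f`. Hence `f` dominates `g`; if `g` also dominates `f`, the utilities
coincide, and under individual rationality and no subsidy the utilities and the allocation
determine the transfers.
-/

open Function

def winners {n : ℕ} (x : Fin n → Bool) : Finset (Fin n) := {i | x i = true}

@[simp]
lemma mem_winners {n : ℕ} {x : Fin n → Bool} {i : Fin n} : i ∈ winners x ↔ x i = true := by
  simp [winners]

lemma exists_eq_false_of_card_winners_lt {n : ℕ} {x : Fin n → Bool} (h : #(winners x) < n) :
    ∃ j, x j = false := by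
  by_contra! hx
  have : winners x = univ := by ext i; simpa using hx i
  simp [this] at h

section vk

variable {n k : ℕ} (v : Fin n → ℝ≥0)

lemma vk_eq_sort (hk : 0 < k) (hkn : k ≤ n) :
    vk n k v = v (Tuple.sort v ⟨n - k, by omega⟩) :=
  dif_pos ⟨hk, hkn⟩

lemma vk_self_le (hn : 0 < n) (i : Fin n) : vk n n v ≤ v i := by
  rw [vk_eq_sort v hn le_rfl]
  simpa using Tuple.monotone_sort v
    (show (⟨n - n, by omega⟩ : Fin n) ≤ (Tuple.sort v).symm i by simp [Fin.le_def])

lemma le_card_filter_vk_le (hk : 0 < k) (hkn : k ≤ n) : k ≤ #{i | vk n k v ≤ v i} := by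
  set a : Fin n := ⟨n - k, by omega⟩
  calc k = #(Ici a) := by simp [a]; omega
    _ ≤ _ := card_le_card_of_injOn (Tuple.sort v)
        (fun j hj => by simpa [vk_eq_sort v hk hkn] using Tuple.monotone_sort v (mem_Ici.1 hj))
        (Tuple.sort v).injective.injOn

lemma card_filter_vk_lt_lt (hk : 0 < k) (hkn : k ≤ n) : #{i | vk n k v < v i} < k := by
  set a : Fin n := ⟨n - k, by omega⟩
  calc #{i | vk n k v < v i} ≤ #(Ioi a) :=
        card_le_card_of_injOn (Tuple.sort v).symm (fun i hi => by
          refine mem_Ioi.2 (lt_of_not_ge fun h => ?_)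
          have hi : vk n k v < v i := by simpa using hi
          have := Tuple.monotone_sort v h
          simp only [comp_apply, Equiv.apply_symm_apply] at this
          exact (vk_eq_sort v hk hkn ▸ hi).not_ge this)
        (Tuple.sort v).symm.injective.injOn
    _ < k := by simp [a]; omega

lemma vk_le_of_card_lt (hk : 0 < k) (hkn : k ≤ n) {s : Finset (Fin n)} (hs : #s < k)
    {b : ℝ≥0} (hb : ∀ i ∉ s, v i ≤ b) : vk n k v ≤ b := by
  by_contra! hlt
  have : ({i | vk n k v ≤ v i} : Finset (Fin n)) ⊆ s := fun i hi => by
    by_contra hi'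
    exact (hlt.trans_le ((mem_filter.1 hi).2)).not_ge (hb i hi')
  exact (le_card_filter_vk_le v hk hkn |>.trans (card_le_card this)).not_gt hs

lemma tilde_iff {m : ℕ} (hmn : m < n) : tilde n m v ↔ ∀ i, vk n (m + 1) v ≤ v i := by
  refine ⟨fun h i => h n (by omega) le_rfl ▸ vk_self_le v (by omega) i, fun h k hk hkn => ?_⟩
  refine le_antisymm (vk_le_of_card_lt v (by omega) hkn
    ((card_filter_vk_lt_lt v (by omega) (by omega)).trans_le hk) fun i hi => ?_) ?_
  · simpa using hi
  · rw [vk_eq_sort v (by omega) hkn]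
    exact h _

end vk

namespace EffAlloc

variable {n m : ℕ} {v : Fin n → ℝ≥0} {x : Fin n → Bool}

lemma sum_le (hx : EffAlloc n m v x) {s : Finset (Fin n)} (hs : #s ≤ m) :
    ∑ i ∈ s, (v i : ℝ) ≤ ∑ i ∈ winners x, (v i : ℝ) := by
  simpa [winners, sum_filter] using hx (fun i => decide (i ∈ s)) (by simpa using hs)

lemma le_of_eq_false (hx : EffAlloc n m v x) (hc : #(winners x) ≤ m) {i j : Fin n}
    (hi : x i = true) (hj : x j = false) : v j ≤ v i := by
  have hiW : i ∈ winners x := mem_winners.2 hi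
  have hjW : j ∉ (winners x).erase i := fun h => by simp_all
  have := hx.sum_le (s := insert j ((winners x).erase i)) <| by
    rwa [card_insert_of_notMem hjW, card_erase_add_one hiW]
  rw [sum_insert hjW, sum_erase_eq_sub hiW] at this
  exact_mod_cast (by linarith : (v j : ℝ) ≤ v i)

lemma eq_zero_of_card_lt (hx : EffAlloc n m v x) (hc : #(winners x) < m) {j : Fin n}
    (hj : x j = false) : v j = 0 := by
  have hjW : j ∉ winners x := by simp [hj]
  have := hx.sum_le (s := insert j (winners x)) (by rw [card_insert_of_notMem hjW]; omega)
  rw [sum_insert hjW] at this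
  exact le_antisymm (by exact_mod_cast (by linarith : (v j : ℝ) ≤ 0)) zero_le

lemma le_vk_of_eq_false (hmn : m < n) (hx : EffAlloc n m v x) (hc : #(winners x) ≤ m)
    {i : Fin n} (hi : x i = false) : v i ≤ vk n (m + 1) v := by
  by_contra! hlt
  rcases hc.lt_or_eq with hc' | hc'
  · simp [hx.eq_zero_of_card_lt hc' hi] at hlt
  · have hiW : i ∉ winners x := by simp [hi]
    have hsub : insert i (winners x) ⊆ ({j | vk n (m + 1) v < v j} : Finset (Fin n)) :=
        fun j hj => by
      rcases mem_insert.1 hj with rfl | hj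
      · simpa using hlt
      · simpa using hlt.trans_le (hx.le_of_eq_false hc (mem_winners.1 hj) hi)
    have := (card_le_card hsub).trans_lt (card_filter_vk_lt_lt v (by omega) (by omega))
    rw [card_insert_of_notMem hiW] at this
    omega

lemma vk_le_of_eq_true (hmn : m < n) (hx : EffAlloc n m v x) (hc : #(winners x) ≤ m)
    {i : Fin n} (hi : x i = true) : vk n (m + 1) v ≤ v i := by
  by_contra! hlt
  obtain ⟨j, hj, hjW⟩ := exists_mem_notMem_of_card_lt_card
    (hc.trans_lt (le_card_filter_vk_le v (by omega) (by omega)))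
  have hjv : vk n (m + 1) v ≤ v j := (mem_filter.1 hj).2
  exact (hjv.trans (hx.le_of_eq_false hc hi (by simpa using hjW))).not_gt hlt

end EffAlloc

namespace Mechanism

variable {n m : ℕ} (f : Mechanism n m)

@[simp]
lemma util_bundle (v : Fin n → ℝ≥0) (i : Fin n) (w : ℝ≥0) :
    util (f.bundle v i) w = (if f.x v i then (w : ℝ) else 0) - f.t v i :=
  rfl

lemma t_eq_zero_of_x_eq_false (hIR : IR f) (hNS : NoSubsidy f) {v : Fin n → ℝ≥0}
    {i : Fin n} (h : f.x v i = false) : f.t v i = 0 := by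
  have := hIR v i
  simp only [util_bundle, h, Bool.false_eq_true, if_false] at this
  linarith [hNS v i]

lemma util_eq_zero_of_x_eq_false (hIR : IR f) (hNS : NoSubsidy f) {v : Fin n → ℝ≥0}
    {i : Fin n} (h : f.x v i = false) (w : ℝ≥0) : util (f.bundle v i) w = 0 := by
  simp [h, f.t_eq_zero_of_x_eq_false hIR hNS h]

lemma t_eq_of_IR_of_noSubsidy (hIR : IR f) (hNS : NoSubsidy f) (v : Fin n → ℝ≥0) (i : Fin n) :
    f.t v i = if f.x v i then (v i : ℝ) - util (f.bundle v i) (v i) else 0 := by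
  cases h : f.x v i
  · simpa using f.t_eq_zero_of_x_eq_false hIR hNS h
  · simp [h]

lemma util_le_of_noSubsidy (hNS : NoSubsidy f) (v : Fin n → ℝ≥0) (i : Fin n) (w : ℝ≥0) :
    util (f.bundle v i) w ≤ w := by
  have := hNS v i
  cases h : f.x v i <;> simp only [util_bundle, h, Bool.false_eq_true, if_true, if_false] <;>
    linarith [w.coe_nonneg]

lemma neg_le_util_of_IR (hIR : IR f) (v : Fin n → ℝ≥0) (i : Fin n) (w : ℝ≥0) :
    -(v i : ℝ) ≤ util (f.bundle v i) w := by
  have := hIR v i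
  cases h : f.x v i <;>
    simp only [util_bundle, h, Bool.false_eq_true, if_true, if_false] at this ⊢ <;>
    linarith [w.coe_nonneg]

lemma nom_of_forall_le_of_exists_nonpos (hIR : IR f)
    (hbest : ∀ i vi, ∃ w₀, ∀ r w, util (f.bundle (update w i r) i) vi ≤
      util (f.bundle (update w₀ i vi) i) vi)
    (hworst : ∀ i vi vi', ∃ w₁, util (f.bundle (update w₁ i vi') i) vi ≤ 0) : NOM f := by
  intro i vi vi'
  obtain ⟨w₀, hw₀⟩ := hbest i vi
  obtain ⟨w₁, hw₁⟩ := hworst i vi vi'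
  have hbdd : BddAbove (Set.range fun w => util (f.bundle (update w i vi) i) vi) :=
    ⟨_, Set.forall_mem_range.2 (hw₀ vi)⟩
  have hbdd' : BddBelow (Set.range fun w => util (f.bundle (update w i vi') i) vi) :=
    ⟨-(vi' : ℝ), Set.forall_mem_range.2 fun w => by
      simpa using f.neg_le_util_of_IR hIR (update w i vi') i vi⟩
  refine ⟨ciSup_le fun w => (hw₀ vi' w).trans (le_ciSup hbdd w₀), ?_⟩
  refine (ciInf_le hbdd' w₁).trans (hw₁.trans (le_ciInf fun w => ?_))
  simpa using hIR (update w i vi) i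

end Mechanism

namespace IsEVPAB

variable {n m : ℕ} {f : Mechanism n m}

lemma efficient (hf : IsEVPAB f) : Efficient f := fun v => by
  by_cases ht : tilde n m v
  · exact ((hf v).1 ht).2.1
  · exact ((hf v).2 ht).2.1

lemma t_eq_of_tilde (hf : IsEVPAB f) {v : Fin n → ℝ≥0} (ht : tilde n m v) (i : Fin n) :
    f.t v i = if f.x v i then (vk n (m + 1) v : ℝ) else 0 :=
  ((hf v).1 ht).2.2 i

lemma t_eq_of_not_tilde (hf : IsEVPAB f) {v : Fin n → ℝ≥0} (ht : ¬ tilde n m v) (i : Fin n) :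
    f.t v i = if f.x v i then (v i : ℝ) else 0 :=
  ((hf v).2 ht).2.2 i

lemma noSubsidy (hf : IsEVPAB f) : NoSubsidy f := fun v i => by
  by_cases ht : tilde n m v
  · rw [hf.t_eq_of_tilde ht]; split_ifs <;> simp
  · rw [hf.t_eq_of_not_tilde ht]; split_ifs <;> simp

lemma util_self_of_tilde (hmn : m < n) (hf : IsEVPAB f) {v : Fin n → ℝ≥0} (ht : tilde n m v)
    (i : Fin n) : util (f.bundle v i) (v i) = v i - vk n (m + 1) v := by
  rw [Mechanism.util_bundle, hf.t_eq_of_tilde ht]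
  cases h : f.x v i
  · have := le_antisymm ((hf.efficient v).le_vk_of_eq_false hmn (f.feasible v) h)
      ((tilde_iff v hmn).1 ht i)
    simp [this]
  · simp

lemma util_self_of_not_tilde (hf : IsEVPAB f) {v : Fin n → ℝ≥0} (ht : ¬ tilde n m v)
    (i : Fin n) : util (f.bundle v i) (v i) = 0 := by
  rw [Mechanism.util_bundle, hf.t_eq_of_not_tilde ht]
  cases f.x v i <;> simp

lemma ir (hmn : m < n) (hf : IsEVPAB f) : IR f := fun v i => by
  by_cases ht : tilde n m v
  · rw [hf.util_self_of_tilde hmn ht]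
    exact sub_nonneg.2 (by exact_mod_cast (tilde_iff v hmn).1 ht i)
  · rw [hf.util_self_of_not_tilde ht]

lemma egalitarianEquivalent (hmn : m < n) (hf : IsEVPAB f) : EgalitarianEquivalent f := by
  intro v
  by_cases ht : tilde n m v
  · exact ⟨(true, vk n (m + 1) v), fun i => by
      rw [hf.util_self_of_tilde hmn ht]; simp [util]⟩
  · exact ⟨(false, 0), fun i => by
      rw [hf.util_self_of_not_tilde ht]; simp [util]⟩

lemma x_eq_false_of_update_const (hmn : m < n) (hf : IsEVPAB f) (i : Fin n) (r : ℝ≥0) :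
    f.x (update (fun _ => r + 1) i r) i = false := by
  set v := update (fun _ => r + 1) i r
  refine Bool.eq_false_iff.2 fun h => ?_
  obtain ⟨j, hj⟩ := exists_eq_false_of_card_winners_lt ((f.feasible v).trans_lt hmn)
  have hji : j ≠ i := by rintro rfl; simp_all
  have := (hf.efficient v).le_of_eq_false (f.feasible v) h hj
  simp [v, update_of_ne hji] at this

lemma nom (hmn : m < n) (hf : IsEVPAB f) : NOM f := by
  have hIR := hf.ir hmn
  have hNS := hf.noSubsidy
  refine f.nom_of_forall_le_of_exists_nonpos hIR (fun i vi => ⟨0, fun r w => ?_⟩)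
    fun i vi vi' => ⟨fun _ => vi' + 1, ?_⟩
  · rcases Nat.eq_zero_or_pos m with rfl | hm
    · have hx : ∀ v, f.x v i = false := fun v => Bool.eq_false_iff.2 fun h =>
        absurd ((card_pos.2 ⟨i, mem_winners.2 h⟩).trans_le (f.feasible v)) (lt_irrefl 0)
      simp only [f.util_eq_zero_of_x_eq_false hIR hNS (hx _), le_refl]
    · have hvk : vk n (m + 1) (update 0 i vi) = 0 := le_antisymm (vk_le_of_card_lt _ (by omega)
        (by omega) (s := {i}) (by simpa using hm) fun j hj => by simp_all) zero_le
      have ht : tilde n m (update 0 i vi) := (tilde_iff _ hmn).2 fun j => hvk ▸ zero_le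
      have := hf.util_self_of_tilde hmn ht i
      rw [update_self, hvk, NNReal.coe_zero, sub_zero] at this
      exact this ▸ f.util_le_of_noSubsidy hNS _ i vi
  · exact (f.util_eq_zero_of_x_eq_false hIR hNS
      (hf.x_eq_false_of_update_const hmn i vi') vi).le

lemma memF (hmn : m < n) (hf : IsEVPAB f) : MemF f :=
  ⟨hf.egalitarianEquivalent hmn, hf.nom hmn, hf.efficient, hf.ir hmn, hf.noSubsidy⟩

lemma util_le_of_memF (hmn : m < n) (hf : IsEVPAB f) {g : Mechanism n m} (hg : MemF g)
    (v : Fin n → ℝ≥0) (i : Fin n) :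
    util (g.bundle v i) (v i) ≤ util (f.bundle v i) (v i) := by
  obtain ⟨hEE, -, hEff, hIR, hNS⟩ := hg
  obtain ⟨⟨b, p⟩, hz⟩ := hEE v
  obtain ⟨j₀, hj₀⟩ := exists_eq_false_of_card_winners_lt ((g.feasible v).trans_lt hmn)
  have hloser : ∀ j, g.x v j = false → util (b, p) (v j) = 0 := fun j hj =>
    hz j ▸ g.util_eq_zero_of_x_eq_false hIR hNS hj _
  cases b
  · have hgi : util (g.bundle v i) (v i) = 0 := by
      rw [hz i]; simpa [util] using hloser j₀ hj₀
    exact hgi ▸ hf.ir hmn v i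
  · have hp : ∀ j, g.x v j = false → v j = v j₀ := fun j hj => by
      have := (hloser j hj).trans (hloser j₀ hj₀).symm
      simp only [util, if_true] at this
      exact_mod_cast sub_left_inj.1 this
    have hvk : vk n (m + 1) v = v j₀ :=
      le_antisymm
        (vk_le_of_card_lt v (by omega) (by omega) (Nat.lt_succ_of_le (g.feasible v))
          fun j hj => (hp j (by simpa using hj)).le)
        ((hEff v).le_vk_of_eq_false hmn (g.feasible v) hj₀)
    have ht : tilde n m v := (tilde_iff v hmn).2 fun k => by
      cases hk : g.x v k
      · exact (hvk.trans (hp k hk).symm).le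
      · exact (hEff v).vk_le_of_eq_true hmn (g.feasible v) hk
    have hpj₀ : p = v j₀ := by simpa [util, sub_eq_zero, eq_comm] using hloser j₀ hj₀
    rw [hz i, hf.util_self_of_tilde hmn ht, hvk, hpj₀]
    simp [util]

lemma of_memF_of_util_le (hmn : m < n) (hf : IsEVPAB f) {g : Mechanism n m} (hg : MemF g)
    (hle : ∀ v i, util (f.bundle v i) (v i) ≤ util (g.bundle v i) (v i)) : IsEVPAB g := by
  have ht : ∀ v i, g.t v i = if g.x v i then (v i : ℝ) - util (f.bundle v i) (v i) else 0 := by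
    intro v i
    rw [← le_antisymm (hf.util_le_of_memF hmn hg v i) (hle v i)]
    exact g.t_eq_of_IR_of_noSubsidy hg.2.2.2.1 hg.2.2.2.2 v i
  refine fun v => ⟨fun htil => ⟨g.feasible v, hg.2.2.1 v, fun i => ?_⟩,
    fun htil => ⟨g.feasible v, hg.2.2.1 v, fun i => ?_⟩⟩
  · rw [Mechanism.bundle, ht, hf.util_self_of_tilde hmn htil, sub_sub_cancel]
  · rw [Mechanism.bundle, ht, hf.util_self_of_not_tilde htil, sub_zero]

end IsEVPAB

theorem stmt17 (n m : ℕ) (hmn : m < n) (f : Mechanism n m) (hf : IsEVPAB f) :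
    MemF f ∧
    (∀ g : Mechanism n m, MemF g →
      ∀ v i, util (g.bundle v i) (v i) ≤ util (f.bundle v i) (v i)) ∧
    (∀ g : Mechanism n m, MemF g → ¬ IsEVPAB g →
      ¬ ∀ v i, util (f.bundle v i) (v i) ≤ util (g.bundle v i) (v i)) :=
  ⟨hf.memF hmn, fun _ hg => hf.util_le_of_memF hmn hg,
    fun _ hg hne hle => hne (hf.of_memF_of_util_le hmn hg hle)⟩

end
end
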